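/- arXiv:2306.09209 — 2 statements merged into one kernel-verified Lean document; each statement's English description precedes it below -/
import Mathlib

section
/- Let ι be a finite nonempty index set, let w : ι → ℝ with w i > 0 for all i, and let a, b : ι → ℝ with a i > b i > 0 for all i. Then the function F(P) = Σ_{i ∈ ι} w i · (log(1 + a i · P i) − log(1 + b i · P i)) is strictly concave on the nonnegative orthant {P : ι → ℝ | ∀ i, P i ≥ 0}. -/
/-!
The derivative of `x ↦ log (1 + a x) - log (1 + b x)` is `(a - b) / ((1 + a x) (1 + b x))`,
which for `0 ≤ b < a` is strictly decreasing on `x ≥ 0`, so each secrecy-rate term is strictly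
concave. A sum of strictly concave functions of the separate coordinates is strictly concave on
the product set, because two distinct points differ in some coordinate, where the inequality is
strict.
-/

open Real Set

theorem StrictConcaveOn.const_mul_of_pos {𝕜 E : Type*} [Field 𝕜] [LinearOrder 𝕜]
    [IsStrictOrderedRing 𝕜] [AddCommMonoid E] [Module 𝕜 E] {s : Set E} {f : E → 𝕜} {c : 𝕜}
    (hf : StrictConcaveOn 𝕜 s f) (hc : 0 < c) : StrictConcaveOn 𝕜 s (fun x => c * f x) := by
  refine ⟨hf.1, fun x hx y hy hxy a b ha hb hab => ?_⟩
  have := mul_lt_mul_of_pos_left (hf.2 hx hy hxy ha hb hab) hc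
  simp only [smul_eq_mul] at this ⊢
  linarith

theorem strictConcaveOn_sum_apply {ι 𝕜 β : Type*} [Fintype ι] {E : ι → Type*} [Field 𝕜]
    [LinearOrder 𝕜] [IsStrictOrderedRing 𝕜] [AddCommMonoid β] [PartialOrder β]
    [IsOrderedCancelAddMonoid β] [Module 𝕜 β] [∀ i, AddCommMonoid (E i)] [∀ i, Module 𝕜 (E i)]
    {s : ∀ i, Set (E i)} {f : ∀ i, E i → β} (hf : ∀ i, StrictConcaveOn 𝕜 (s i) (f i)) :
    StrictConcaveOn 𝕜 (univ.pi s) (fun x => ∑ i, f i (x i)) := by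
  refine ⟨convex_pi fun i _ => (hf i).1, fun x hx y hy hxy a b ha hb hab => ?_⟩
  obtain ⟨j, hj⟩ := Function.ne_iff.mp hxy
  simp only [Finset.smul_sum, ← Finset.sum_add_distrib, Pi.add_apply, Pi.smul_apply]
  refine Finset.sum_lt_sum (fun i _ => ?_) ⟨j, Finset.mem_univ j, ?_⟩
  · exact (hf i).concaveOn.2 (hx i trivial) (hy i trivial) ha.le hb.le hab
  · exact (hf j).2 (hx j trivial) (hy j trivial) hj ha hb hab

theorem hasDerivAt_log_one_add_mul {c x : ℝ} (hx : 0 < 1 + c * x) :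
    HasDerivAt (fun y => log (1 + c * y)) (c / (1 + c * x)) x := by
  simpa using (((hasDerivAt_id x).const_mul c).const_add 1).log hx.ne'

theorem deriv_log_one_add_mul_sub_log_one_add_mul {a b x : ℝ} (hax : 0 < 1 + a * x)
    (hbx : 0 < 1 + b * x) :
    deriv (fun y => log (1 + a * y) - log (1 + b * y)) x =
      (a - b) / ((1 + a * x) * (1 + b * x)) := by
  rw [((hasDerivAt_log_one_add_mul hax).fun_sub (hasDerivAt_log_one_add_mul hbx)).deriv,
    div_sub_div _ _ hax.ne' hbx.ne']
  ring

theorem strictConcaveOn_log_one_add_mul_sub_log_one_add_mul {a b : ℝ} (hb : 0 ≤ b)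
    (hba : b < a) :
    StrictConcaveOn ℝ (Ici 0) (fun x => log (1 + a * x) - log (1 + b * x)) := by
  have hpos : ∀ {c x : ℝ}, 0 ≤ c → 0 ≤ x → 0 < 1 + c * x := fun hc hx => by positivity
  have ha : 0 < a := hb.trans_lt hba
  refine StrictAntiOn.strictConcaveOn_of_deriv (convex_Ici 0) ?_ ?_
  · exact (ContinuousOn.log (by fun_prop) fun x hx => (hpos ha.le hx).ne').sub
      (ContinuousOn.log (by fun_prop) fun x hx => (hpos hb hx).ne')
  · rw [interior_Ici]
    intro x hx y hy hxy
    have hx0 : 0 ≤ x := hx.le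
    have hy0 : 0 ≤ y := hy.le
    rw [deriv_log_one_add_mul_sub_log_one_add_mul (hpos ha.le hx0) (hpos hb hx0),
      deriv_log_one_add_mul_sub_log_one_add_mul (hpos ha.le hy0) (hpos hb hy0)]
    refine div_lt_div_of_pos_left (sub_pos.2 hba) (by positivity) ?_
    exact mul_lt_mul (by gcongr) (by gcongr) (hpos hb hx0) (hpos ha.le hy0).le

theorem stmt_6_general {ι : Type*} [Fintype ι] (w a b : ι → ℝ)
    (hw : ∀ i, 0 < w i) (hb : ∀ i, 0 < b i) (hba : ∀ i, b i < a i) :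
    StrictConcaveOn ℝ {P : ι → ℝ | ∀ i, 0 ≤ P i}
      (fun P : ι → ℝ =>
        ∑ i, w i * (Real.log (1 + a i * P i) - Real.log (1 + b i * P i))) := by
  have hterm : ∀ i, StrictConcaveOn ℝ (Ici 0)
      (fun x => w i * (log (1 + a i * x) - log (1 + b i * x))) := fun i =>
    (strictConcaveOn_log_one_add_mul_sub_log_one_add_mul (hb i).le (hba i)).const_mul_of_pos
      (hw i)
  have horthant : {P : ι → ℝ | ∀ i, 0 ≤ P i} = univ.pi fun _ => Ici 0 := by
    ext P
    simp only [mem_ofPred_eq, mem_pi, mem_univ, mem_Ici, forall_const]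
  rw [horthant]
  exact strictConcaveOn_sum_apply hterm

theorem stmt_6 {ι : Type*} [Fintype ι] [Nonempty ι] (w a b : ι → ℝ)
    (hw : ∀ i, 0 < w i) (hb : ∀ i, 0 < b i) (hba : ∀ i, b i < a i) :
    StrictConcaveOn ℝ {P : ι → ℝ | ∀ i, 0 ≤ P i}
      (fun P : ι → ℝ =>
        ∑ i, w i * (Real.log (1 + a i * P i) - Real.log (1 + b i * P i))) :=
  stmt_6_general w a b hw hb hba
end

section
/- Let ι be a finite nonempty index set, w : ι → ℝ with w i > 0 for all i, a, b : ι → ℝ with a i > b i > 0 for all i, and let P̄ > 0. Define F(P) = Σ_{i ∈ ι} w i · (log(1 + a i · P i) − log(1 + b i · P i)) and the feasible set K = {P : ι → ℝ | (∀ i, P i ≥ 0) ∧ Σ_i w i · P i ≤ P̄}. If P* ∈ K attains the maximum of F over K, then Σ_i w i · P*_i = P̄. -/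
/-!
If the power budget were not exhausted, the slack could be spent on any single channel state.
Under the degradedness condition `b < a` each secrecy-rate term `log (1 + a t) - log (1 + b t)`
is strictly increasing in the power `t ≥ 0`, so this strictly raises the utility while staying
feasible, contradicting maximality.
-/

open Finset Set

lemma strictMonoOn_log_one_add_mul_sub_log_one_add_mul {a b : ℝ} (hb : 0 ≤ b) (hba : b < a) :
    StrictMonoOn (fun t => Real.log (1 + a * t) - Real.log (1 + b * t)) (Ici 0) := by
  intro s (hs : 0 ≤ s) t (ht : 0 ≤ t) hst
  have ha : 0 ≤ a := hb.trans hba.le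
  have hbs : 0 < 1 + b * s := by positivity
  have hat : 0 < 1 + a * t := by positivity
  have hcross : (1 + a * s) * (1 + b * t) < (1 + a * t) * (1 + b * s) := by
    nlinarith [mul_pos (sub_pos.2 hba) (sub_pos.2 hst)]
  have hlog := Real.log_lt_log (by positivity) hcross
  rw [Real.log_mul (by positivity) (by positivity), Real.log_mul hat.ne' hbs.ne'] at hlog
  linarith

lemma sum_lt_sum_of_strictMonoOn {ι : Type*} [Fintype ι] {f : ι → ℝ → ℝ}
    (hf : ∀ j, StrictMonoOn (f j) (Ici 0)) {P Q : ι → ℝ} (hP : 0 ≤ P) (hPQ : P ≤ Q) {i : ι}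
    (hi : P i < Q i) : ∑ j, f j (P j) < ∑ j, f j (Q j) :=
  have hQ : 0 ≤ Q := hP.trans hPQ
  Finset.sum_lt_sum (fun j _ => (hf j).monotoneOn (hP j) (hQ j) (hPQ j))
    ⟨i, mem_univ i, hf i (hP i) (hQ i) hi⟩

theorem stmt_7_general {ι : Type*} [Fintype ι] [Nonempty ι] (w a b : ι → ℝ) (Pbar : ℝ)
    (hw : ∀ i, 0 < w i) (hb : ∀ i, 0 < b i) (hba : ∀ i, b i < a i)
    (F : (ι → ℝ) → ℝ)
    (hF : F = fun P : ι → ℝ =>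
      ∑ i, w i * (Real.log (1 + a i * P i) - Real.log (1 + b i * P i)))
    (K : Set (ι → ℝ))
    (hK : K = {P : ι → ℝ | (∀ i, 0 ≤ P i) ∧ ∑ i, w i * P i ≤ Pbar})
    (Pstar : ι → ℝ) (hmem : Pstar ∈ K) (hmax : ∀ Q ∈ K, F Q ≤ F Pstar) :
    ∑ i, w i * Pstar i = Pbar := by
  classical
  subst hF hK
  obtain ⟨hPstar, hbudget⟩ := hmem
  refine hbudget.antisymm (not_lt.1 fun hslack => ?_)
  obtain ⟨i⟩ := ‹Nonempty ι›
  set δ := (Pbar - ∑ j, w j * Pstar j) / w i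
  have hδ : 0 < δ := div_pos (sub_pos.2 hslack) (hw i)
  set Q : ι → ℝ := Pstar + Pi.single i δ
  have hPstar_le : Pstar ≤ Q := le_add_of_nonneg_right (Pi.single_nonneg.2 hδ.le)
  have hQ_budget : ∑ j, w j * Q j = Pbar := by
    simp [Q, mul_add, sum_add_distrib, Pi.single_apply, δ, mul_div_cancel₀ _ (hw i).ne']
  have hgain := sum_lt_sum_of_strictMonoOn
    (f := fun j t => w j * (Real.log (1 + a j * t) - Real.log (1 + b j * t)))
    (fun j s hs t ht hst => mul_lt_mul_of_pos_left
      (strictMonoOn_log_one_add_mul_sub_log_one_add_mul (hb j).le (hba j) hs ht hst) (hw j))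
    hPstar hPstar_le (i := i) (by simpa [Q] using hδ)
  exact (hmax Q ⟨fun j => (hPstar j).trans (hPstar_le j), hQ_budget.le⟩).not_gt hgain

theorem stmt_7 {ι : Type*} [Fintype ι] [Nonempty ι] (w a b : ι → ℝ) (Pbar : ℝ)
    (hw : ∀ i, 0 < w i) (hb : ∀ i, 0 < b i) (hba : ∀ i, b i < a i)
    (hPbar : 0 < Pbar)
    (F : (ι → ℝ) → ℝ)
    (hF : F = fun P : ι → ℝ =>
      ∑ i, w i * (Real.log (1 + a i * P i) - Real.log (1 + b i * P i)))
    (K : Set (ι → ℝ))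
    (hK : K = {P : ι → ℝ | (∀ i, 0 ≤ P i) ∧ ∑ i, w i * P i ≤ Pbar})
    (Pstar : ι → ℝ) (hmem : Pstar ∈ K) (hmax : ∀ Q ∈ K, F Q ≤ F Pstar) :
    ∑ i, w i * Pstar i = Pbar :=
  stmt_7_general w a b Pbar hw hb hba F hF K hK Pstar hmem hmax
end
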